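/- arXiv:2004.08001 — 6 statements merged into one kernel-verified Lean document; each statement's English description precedes it below -/
import Mathlib

section
/- Let q be a prime power, let f_1, …, f_k ∈ F_q[x] be nonzero polynomials, let d_1, …, d_k be positive integers, and let b be an element of the algebraic closure of F_q. Let ℓ be any positive integer divisible by each of d_1, …, d_k, set G_ℓ(x) = gcd(x^ℓ − 1, f_1(x)(x^ℓ − 1)/(x^{d_1} − 1), …, f_k(x)(x^ℓ − 1)/(x^{d_k} − 1)) and H_ℓ(x) = (x^ℓ − 1)/G_ℓ(x). Then the equation L_{f_1}(x_1) + ⋯ + L_{f_k}(x_k) = b has a solution (z_1, …, z_k) with z_i ∈ F_{q^{d_i}} for each i if and only if L_{H_ℓ}(b) = 0. -/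
/-!
The map `g ↦ L_g` is an `F`-algebra homomorphism from `F[X]` to the `F`-linear endomorphisms of the
algebraic closure, sending `X` to the Frobenius; so `L_{ab} = L_a ∘ L_b` and
`F_{q^d} = ker L_{X^d - 1}`. Write `E = X^ℓ - 1`, `eᵢ = X^{dᵢ} - 1` and `S = ∑ᵢ L_{fᵢ}(F_{q^{dᵢ}})`,
the set of right-hand sides for which the equation is solvable.

* `G ∣ fᵢ E / eᵢ` and `E = G H` give `eᵢ ∣ fᵢ H`, so `L_H` vanishes on `S`.
* The polynomials `a` with `L_a(F_{q^ℓ}) ⊆ S` form an ideal containing `E` and each `fᵢ E / eᵢ`,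
  hence their gcd `G`.
* When `P(0) ≠ 0`, `ker L_P` is the root set of the separable polynomial `∑ aᵢ X^{qⁱ}`, so it has
  dimension `deg P` over `F`. Rank–nullity for `L_G` on `ker L_E` then gives
  `L_G(ker L_E) = ker L_H`; as `L_G(ker L_E) ⊆ S ⊆ ker L_H`, this forces `S = ker L_H`.
-/

open Polynomial Module
open LinearMap (ker)

/-- The `q`-associate of a polynomial `f = ∑ aᵢ xⁱ` over the finite field `F` (with
`q = Fintype.card F` elements), evaluated at `α` in the algebraic closure:
`L_f(α) = ∑ aᵢ α^(qⁱ)`. -/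
noncomputable def qAssoc (F : Type*) [Field F] [Fintype F] (f : Polynomial F)
    (α : AlgebraicClosure F) : AlgebraicClosure F :=
  ∑ i ∈ f.support, algebraMap F (AlgebraicClosure F) (f.coeff i) * α ^ (Fintype.card F) ^ i

theorem Submodule.mem_iSup_map_iff {R M N ι : Type*} [Semiring R] [AddCommMonoid M] [Module R M]
    [AddCommMonoid N] [Module R N] [Fintype ι] (φ : ι → M →ₗ[R] N) (p : ι → Submodule R M)
    {b : N} : b ∈ ⨆ i, (p i).map (φ i) ↔ ∃ z : ι → M, (∀ i, z i ∈ p i) ∧ ∑ i, φ i (z i) = b := by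
  constructor
  · intro hb
    obtain ⟨μ, hμ⟩ := (mem_iSup_finset_iff_exists_sum (s := Finset.univ) _ b).mp (by simpa using hb)
    choose z hz hφ using fun i => mem_map.mp (μ i).2
    exact ⟨z, hz, by simp only [hφ, hμ]⟩
  · rintro ⟨z, hz, rfl⟩
    exact sum_mem_iSup fun i => mem_map_of_mem (hz i)

theorem dvd_mul_of_mul_eq_of_dvd {R : Type*} [CommRing R] [IsDomain R] {e f g G H : R}
    (hg : e * g = f * (G * H)) (hG : G ∣ g) (hG0 : G ≠ 0) : e ∣ H * f := by
  obtain ⟨u, rfl⟩ := hG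
  refine ⟨u, mul_left_cancel₀ hG0 ?_⟩
  linear_combination -hg

theorem FiniteField.frobeniusAlgHom_toLinearMap_pow_apply {F K : Type*} [Field F] [Fintype F]
    [CommRing K] [Algebra F K] (n : ℕ) (x : K) :
    ((frobeniusAlgHom F K).toLinearMap ^ n) x = x ^ Fintype.card F ^ n := by
  simp [Module.End.pow_apply, coe_frobeniusAlgHom, pow_iterate]

section Polynomial

variable {F : Type*} [Field F] [Fintype F]

variable (F) in
noncomputable def qAssocPoly (g : F[X]) : F[X] :=
  ∑ i ∈ g.support, C (g.coeff i) * X ^ Fintype.card F ^ i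

lemma coeff_qAssocPoly_card_pow (g : F[X]) (n : ℕ) :
    (qAssocPoly F g).coeff (Fintype.card F ^ n) = g.coeff n := by
  simp [qAssocPoly, finsetSum_coeff, Nat.pow_right_inj Fintype.one_lt_card, eq_comm]

lemma natDegree_qAssocPoly {g : F[X]} (hg : g ≠ 0) :
    (qAssocPoly F g).natDegree = Fintype.card F ^ g.natDegree := by
  refine natDegree_eq_of_le_of_coeff_ne_zero ?_ (by simpa [coeff_qAssocPoly_card_pow])
  refine natDegree_sum_le_of_forall_le _ _ fun i hi => (natDegree_C_mul_X_pow_le _ _).trans ?_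
  exact Nat.pow_le_pow_right Fintype.card_pos (le_natDegree_of_mem_supp i hi)

lemma derivative_qAssocPoly (g : F[X]) : derivative (qAssocPoly F g) = C (g.coeff 0) := by
  rw [qAssocPoly, derivative_sum, Finset.sum_eq_single 0]
  · simp
  · intro i _ hi
    simp [derivative_X_pow, hi]
  · intro h
    simp [notMem_support_iff.mp h]

lemma separable_qAssocPoly {g : F[X]} (hg : g.coeff 0 ≠ 0) : (qAssocPoly F g).Separable := by
  rw [separable_def, derivative_qAssocPoly]
  simpa using (isCoprime_mul_unit_left_right (isUnit_C.mpr hg.isUnit) _ 1).mpr isCoprime_one_right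

end Polynomial

section CommRing

variable (F : Type*) [Field F] [Fintype F] (K : Type*) [CommRing K] [Algebra F K]

noncomputable def qAssocEnd : F[X] →ₐ[F] Module.End F K :=
  aeval (FiniteField.frobeniusAlgHom F K).toLinearMap

variable {F K}

lemma qAssocEnd_apply (g : F[X]) (x : K) : qAssocEnd F K g x = aeval x (qAssocPoly F g) := by
  rw [qAssocEnd, aeval_def, eval₂_eq_sum, Polynomial.sum_def, LinearMap.sum_apply]
  simp [qAssocPoly, FiniteField.frobeniusAlgHom_toLinearMap_pow_apply, Algebra.smul_def]

lemma qAssoc_eq_qAssocEnd (g : F[X]) (x : AlgebraicClosure F) :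
    qAssoc F g x = qAssocEnd F (AlgebraicClosure F) g x := by
  simp [qAssoc, qAssocEnd_apply, qAssocPoly, map_sum]

lemma qAssocEnd_mul_apply (a b : F[X]) (x : K) :
    qAssocEnd F K (a * b) x = qAssocEnd F K a (qAssocEnd F K b x) := by
  rw [map_mul, Module.End.mul_apply]

lemma mem_ker_qAssocEnd_X_pow_sub_one {n : ℕ} {x : K} :
    x ∈ ker (qAssocEnd F K (X ^ n - 1)) ↔ x ^ Fintype.card F ^ n = x := by
  simp [qAssocEnd, FiniteField.frobeniusAlgHom_toLinearMap_pow_apply, sub_eq_zero]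

lemma ker_qAssocEnd_mono {a b : F[X]} (h : a ∣ b) :
    ker (qAssocEnd F K a) ≤ ker (qAssocEnd F K b) := by
  obtain ⟨c, rfl⟩ := h
  intro x hx
  rw [LinearMap.mem_ker, mul_comm, qAssocEnd_mul_apply, LinearMap.mem_ker.mp hx, map_zero]

lemma map_ker_qAssocEnd_le_ker {a b e : F[X]} (h : e ∣ a * b) :
    (ker (qAssocEnd F K e)).map (qAssocEnd F K b) ≤ ker (qAssocEnd F K a) := by
  rintro _ ⟨x, hx, rfl⟩
  rw [LinearMap.mem_ker, ← qAssocEnd_mul_apply]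
  exact ker_qAssocEnd_mono h hx

def kerMapIdeal (E : F[X]) (S : Submodule F K) : Ideal F[X] where
  carrier := {a | ∀ x ∈ ker (qAssocEnd F K E), qAssocEnd F K a x ∈ S}
  add_mem' ha hb x hx := by
    rw [map_add, LinearMap.add_apply]
    exact S.add_mem (ha x hx) (hb x hx)
  zero_mem' x _ := by simp
  smul_mem' c a ha x hx := by
    rw [smul_eq_mul, mul_comm, qAssocEnd_mul_apply]
    exact ha _ (map_ker_qAssocEnd_le_ker (dvd_mul_right E c) ⟨x, hx, rfl⟩)

lemma self_mem_kerMapIdeal (E : F[X]) (S : Submodule F K) : E ∈ kerMapIdeal E S := fun x hx => by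
  rw [LinearMap.mem_ker.mp hx]
  exact S.zero_mem

lemma mul_mem_kerMapIdeal {E e f t : F[X]} {S : Submodule F K}
    (hS : (ker (qAssocEnd F K e)).map (qAssocEnd F K f) ≤ S) (ht : E ∣ e * t) :
    f * t ∈ kerMapIdeal E S := fun x hx => by
  rw [qAssocEnd_mul_apply]
  exact hS ⟨_, map_ker_qAssocEnd_le_ker ht ⟨x, hx, rfl⟩, rfl⟩

lemma gcd_mem_kerMapIdeal [DecidableEq F] {ι : Type*} [Fintype ι] {E : F[X]} {e f : ι → F[X]}
    (he0 : ∀ i, e i ≠ 0) (he : ∀ i, e i ∣ E) :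
    gcd E (Finset.univ.gcd fun i => f i * E / e i) ∈
      kerMapIdeal E (⨆ i, (ker (qAssocEnd F K (e i))).map (qAssocEnd F K (f i))) := by
  rw [Submodule.IsPrincipal.mem_iff_generator_dvd]
  refine dvd_gcd ?_ (Finset.dvd_gcd fun i _ => ?_) <;>
    rw [← Submodule.IsPrincipal.mem_iff_generator_dvd]
  · exact self_mem_kerMapIdeal E _
  · rw [EuclideanDomain.mul_div_assoc _ (he i)]
    exact mul_mem_kerMapIdeal (le_iSup_of_le i le_rfl)
      (EuclideanDomain.mul_div_cancel' (he0 i) (he i)).symm.dvd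

end CommRing

section Field

variable {F : Type*} [Field F] [Fintype F] {K : Type*} [Field K] [Algebra F K]

lemma coe_ker_qAssocEnd {g : F[X]} (hg : g.coeff 0 ≠ 0) :
    (ker (qAssocEnd F K g) : Set K) = (qAssocPoly F g).rootSet K := by
  ext x
  simp [mem_rootSet_of_ne (separable_qAssocPoly hg).ne_zero, qAssocEnd_apply]

variable [IsAlgClosed K]

lemma natCard_ker_qAssocEnd {g : F[X]} (hg : g.coeff 0 ≠ 0) :
    Nat.card (ker (qAssocEnd F K g)) = Fintype.card F ^ g.natDegree := by
  rw [← SetLike.coe_sort_coe, coe_ker_qAssocEnd hg, Nat.card_eq_fintype_card,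
    card_rootSet_eq_natDegree (separable_qAssocPoly hg) (IsAlgClosed.splits (_ : K[X])),
    natDegree_qAssocPoly (by rintro rfl; simp at hg)]

lemma finiteDimensional_ker_qAssocEnd {g : F[X]} (hg : g.coeff 0 ≠ 0) :
    FiniteDimensional F (ker (qAssocEnd F K g)) :=
  have : Finite (ker (qAssocEnd F K g)) := Nat.finite_of_card_ne_zero
    ((natCard_ker_qAssocEnd hg).trans_ne (pow_ne_zero _ Fintype.card_ne_zero))
  Module.Finite.of_finite

lemma finrank_ker_qAssocEnd {g : F[X]} (hg : g.coeff 0 ≠ 0) :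
    finrank F (ker (qAssocEnd F K g)) = g.natDegree := by
  have := finiteDimensional_ker_qAssocEnd (K := K) hg
  rw [← Nat.pow_right_inj (Fintype.one_lt_card (α := F)), ← natCard_ker_qAssocEnd (K := K) hg,
    Module.natCard_eq_pow_finrank (K := F), Nat.card_eq_fintype_card]

lemma map_ker_qAssocEnd_mul {G H : F[X]} (h0 : (G * H).coeff 0 ≠ 0) :
    (ker (qAssocEnd F K (G * H))).map (qAssocEnd F K G) = ker (qAssocEnd F K H) := by
  have hG0 : G.coeff 0 ≠ 0 := left_ne_zero_of_mul (mul_coeff_zero G H ▸ h0)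
  have hH0 : H.coeff 0 ≠ 0 := right_ne_zero_of_mul (mul_coeff_zero G H ▸ h0)
  have := finiteDimensional_ker_qAssocEnd (K := K) hH0
  have := finiteDimensional_ker_qAssocEnd (K := K) h0
  refine Submodule.eq_of_le_of_finrank_le (map_ker_qAssocEnd_le_ker (mul_comm G H).dvd) ?_
  set φ := (qAssocEnd F K G).domRestrict (ker (qAssocEnd F K (G * H)))
  have hker : ker φ ≃ₗ[F] ker (qAssocEnd F K G) := by
    rw [LinearMap.ker_domRestrict]
    exact Submodule.comapSubtypeEquivOfLe (ker_qAssocEnd_mono (dvd_mul_right G H))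
  have hrank := LinearMap.finrank_range_add_finrank_ker φ
  rw [LinearMap.range_domRestrict, hker.finrank_eq, finrank_ker_qAssocEnd hG0,
    finrank_ker_qAssocEnd h0, natDegree_mul (by rintro rfl; simp at hG0)
      (by rintro rfl; simp at hH0)] at hrank
  rw [finrank_ker_qAssocEnd hH0]
  omega

end Field

theorem linear_equation_solvable_iff_general
    (F : Type*) [Field F] [Fintype F] [DecidableEq F]
    (q : ℕ) (hq : q = Fintype.card F)
    {k : ℕ} (f : Fin k → Polynomial F)
    (d : Fin k → ℕ) (hd : ∀ i, 0 < d i)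
    (b : AlgebraicClosure F)
    (ℓ : ℕ) (hℓ : 0 < ℓ) (hdvd : ∀ i, d i ∣ ℓ)
    (G H : Polynomial F)
    (hG : G = gcd ((X : Polynomial F) ^ ℓ - 1)
      (Finset.univ.gcd fun i => f i * ((X : Polynomial F) ^ ℓ - 1) / ((X : Polynomial F) ^ (d i) - 1)))
    (hH : H = ((X : Polynomial F) ^ ℓ - 1) / G) :
    (∃ z : Fin k → AlgebraicClosure F,
        (∀ i, z i ^ q ^ (d i) = z i) ∧ ∑ i, qAssoc F (f i) (z i) = b) ↔
      qAssoc F H b = 0 := by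
  subst hq
  generalize hE : (X : F[X]) ^ ℓ - 1 = E at hG hH
  have hE0 : E.coeff 0 ≠ 0 := by simp [← hE, hℓ.ne]
  have he0 (i : Fin k) : (X ^ d i - 1 : F[X]) ≠ 0 := by
    simpa using X_pow_sub_C_ne_zero (hd i) (1 : F)
  have he (i : Fin k) : (X ^ d i - 1 : F[X]) ∣ E := by
    obtain ⟨c, hc⟩ := hdvd i
    exact hE ▸ hc ▸ pow_one_sub_dvd_pow_mul_sub_one X _ _
  have hGE : G ∣ E := hG ▸ gcd_dvd_left _ _
  have hG0 : G ≠ 0 := ne_zero_of_dvd_ne_zero (by rintro rfl; simp at hE0) hGE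
  have hGH : G * H = E := hH ▸ EuclideanDomain.mul_div_cancel' hG0 hGE
  set L := qAssocEnd F (AlgebraicClosure F)
  set S := ⨆ i, (ker (L (X ^ d i - 1))).map (L (f i))
  have hSH : S ≤ ker (L H) := by
    refine iSup_le fun i => map_ker_qAssocEnd_le_ker
      (dvd_mul_of_mul_eq_of_dvd (g := f i * E / (X ^ d i - 1)) ?_ ?_ hG0)
    · rw [hGH]
      exact EuclideanDomain.mul_div_cancel' (he0 i) ((he i).mul_left _)
    · rw [hG]
      exact (gcd_dvd_right _ _).trans (Finset.gcd_dvd (Finset.mem_univ i))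
  have hHS : ker (L H) ≤ S := by
    rw [← map_ker_qAssocEnd_mul (hGH ▸ hE0), hGH]
    rintro _ ⟨x, hx, rfl⟩
    exact hG ▸ gcd_mem_kerMapIdeal he0 he x hx
  rw [qAssoc_eq_qAssocEnd, ← LinearMap.mem_ker, ← le_antisymm hSH hHS, Submodule.mem_iSup_map_iff]
  simp only [L, mem_ker_qAssocEnd_X_pow_sub_one, qAssoc_eq_qAssocEnd]

/-- **Theorem 1 (existence part).** For nonzero `f₁, …, f_k ∈ F_q[x]`, positive integers
`d₁, …, d_k`, `b` in the algebraic closure of `F_q`, and `ℓ` divisible by each `dᵢ`, with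
`G_ℓ = gcd(x^ℓ - 1, f₁(x)(x^ℓ-1)/(x^{d₁}-1), …)` and `H_ℓ = (x^ℓ-1)/G_ℓ`, the equation
`L_{f₁}(x₁) + ⋯ + L_{f_k}(x_k) = b` has a solution with `zᵢ ∈ F_{q^{dᵢ}}` iff `L_{H_ℓ}(b) = 0`. -/
theorem linear_equation_solvable_iff
    (F : Type*) [Field F] [Fintype F] [DecidableEq F]
    (q : ℕ) (hq : q = Fintype.card F)
    {k : ℕ} (f : Fin k → Polynomial F) (hf : ∀ i, f i ≠ 0)
    (d : Fin k → ℕ) (hd : ∀ i, 0 < d i)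
    (b : AlgebraicClosure F)
    (ℓ : ℕ) (hℓ : 0 < ℓ) (hdvd : ∀ i, d i ∣ ℓ)
    (G H : Polynomial F)
    (hG : G = gcd ((X : Polynomial F) ^ ℓ - 1)
      (Finset.univ.gcd fun i => f i * ((X : Polynomial F) ^ ℓ - 1) / ((X : Polynomial F) ^ (d i) - 1)))
    (hH : H = ((X : Polynomial F) ^ ℓ - 1) / G) :
    (∃ z : Fin k → AlgebraicClosure F,
        (∀ i, z i ^ q ^ (d i) = z i) ∧ ∑ i, qAssoc F (f i) (z i) = b) ↔
      qAssoc F H b = 0 :=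
  linear_equation_solvable_iff_general F q hq f d hd b ℓ hℓ hdvd G H hG hH
end

section
/- Let q be a prime power, let f_1, …, f_k ∈ F_q[x] be nonzero polynomials, let d_1, …, d_k be positive integers, and let b be an element of the algebraic closure of F_q. Let ℓ be any positive integer divisible by each of d_1, …, d_k, set G_ℓ(x) = gcd(x^ℓ − 1, f_1(x)(x^ℓ − 1)/(x^{d_1} − 1), …, f_k(x)(x^ℓ − 1)/(x^{d_k} − 1)) and H_ℓ(x) = (x^ℓ − 1)/G_ℓ(x). If L_{H_ℓ}(b) = 0, then the number of tuples (z_1, …, z_k) with z_i ∈ F_{q^{d_i}} for each i and L_{f_1}(z_1) + ⋯ + L_{f_k}(z_k) = b equals q^{d_1 + ⋯ + d_k − deg H_ℓ}. -/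
open Polynomial

/-!
Let `φ : x ↦ x ^ q` be the `q`-Frobenius, an `F_q`-linear endomorphism of the algebraic closure.
Then `L_f = f(φ)`, so `L_{uv} = L_u ∘ L_v` and `F_{q^d} = ker L_{x^d - 1}`. When `g(0) ≠ 0` the
`q`-polynomial `L_g` is separable of degree `q ^ deg g`, so `ker L_g` has dimension `deg g`; with
Bézout this gives `ker L_{gcd(u,v)} = ker L_u ⊓ ker L_v` and, counting dimensions,
`ker L_{lcm(u,v)} = ker L_u ⊔ ker L_v`. Hence `L_{fᵢ}` maps `F_{q^{dᵢ}}` onto `ker L_{hᵢ}` with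
`hᵢ = (x^{dᵢ} - 1) / gcd(fᵢ, x^{dᵢ} - 1)`, and `(zᵢ) ↦ ∑ L_{fᵢ}(zᵢ)` has image
`ker L_{lcm hᵢ} = ker L_{H_ℓ}` (`H_ℓ` and `lcm hᵢ` are associated), of dimension `deg H_ℓ`.
For `b` in the image the solutions form a coset of the kernel, of dimension `∑ dᵢ - deg H_ℓ`.
-/

open Module LinearMap

namespace Polynomial

theorem ne_zero_of_not_X_dvd {R : Type*} [Semiring R] {p : R[X]} (hp : ¬ X ∣ p) : p ≠ 0 := by
  rintro rfl
  exact hp (dvd_zero X)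

variable {R M : Type*} [Field R] [AddCommGroup M] [Module R M] (φ : Module.End R M)

theorem natDegree_gcd_add_natDegree_lcm [DecidableEq R] {u v : R[X]} (hu : u ≠ 0) (hv : v ≠ 0) :
    (gcd u v).natDegree + (lcm u v).natDegree = u.natDegree + v.natDegree := by
  rw [← natDegree_mul (gcd_ne_zero_of_left hu) (lcm_ne_zero_iff.mpr ⟨hu, hv⟩),
    ← natDegree_mul hu hv]
  exact natDegree_eq_of_degree_eq (degree_eq_degree_of_associated (gcd_mul_lcm u v))

theorem ker_aeval_le_ker_aeval_of_dvd {p q : R[X]} (h : p ∣ q) :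
    ker (aeval φ p) ≤ ker (aeval φ q) := by
  obtain ⟨r, rfl⟩ := h
  rw [mul_comm, map_mul, Module.End.mul_eq_comp]
  exact ker_le_ker_comp _ _

theorem ker_aeval_eq_of_associated {p q : R[X]} (h : Associated p q) :
    ker (aeval φ p) = ker (aeval φ q) :=
  le_antisymm (ker_aeval_le_ker_aeval_of_dvd φ h.dvd) (ker_aeval_le_ker_aeval_of_dvd φ h.symm.dvd)

theorem ker_aeval_gcd [DecidableEq R] (p q : R[X]) :
    ker (aeval φ (gcd p q)) = ker (aeval φ p) ⊓ ker (aeval φ q) := by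
  refine le_antisymm (le_inf (ker_aeval_le_ker_aeval_of_dvd φ (gcd_dvd_left p q))
    (ker_aeval_le_ker_aeval_of_dvd φ (gcd_dvd_right p q))) ?_
  rintro x ⟨hp, hq⟩
  obtain ⟨a, b, hab⟩ := exists_gcd_eq_mul_add_mul p q
  simp only [SetLike.mem_coe, mem_ker] at hp hq
  rw [mem_ker, hab, mul_comm p, mul_comm q, map_add, map_mul, map_mul, LinearMap.add_apply,
    Module.End.mul_apply, Module.End.mul_apply, hp, hq, map_zero, map_zero, add_zero]

end Polynomial

namespace LinearMap

theorem range_sum_comp_proj {R M ι : Type*} [CommRing R] [AddCommGroup M] [Module R M]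
    [Fintype ι] {φ : ι → Type*} [∀ i, AddCommGroup (φ i)] [∀ i, Module R (φ i)]
    (g : ∀ i, φ i →ₗ[R] M) :
    range (∑ i, (g i).comp (proj i)) = ⨆ i, range (g i) := by
  classical
  rw [← Submodule.map_top, ← iSup_range_single, Submodule.map_iSup]
  refine iSup_congr fun i => ?_
  rw [← range_comp]
  congr 1
  ext x
  simp only [comp_apply, LinearMap.sum_apply, proj_apply, single_apply]
  rw [Finset.sum_eq_single i (fun j _ hj => by rw [Pi.single_eq_of_ne hj, map_zero]) (by simp),
    Pi.single_eq_same]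

theorem natCard_fiber_mul_pow_finrank_range {K V W : Type*} [Field K] [Finite K]
    [AddCommGroup V] [Module K V] [FiniteDimensional K V] [AddCommGroup W] [Module K W]
    (T : V →ₗ[K] W) {b : W} (hb : b ∈ range T) :
    Nat.card {v // T v = b} * Nat.card K ^ finrank K (range T) = Nat.card K ^ finrank K V := by
  obtain ⟨v₀, rfl⟩ := hb
  have hfiber : Nat.card {v // T v = T v₀} = Nat.card (ker T) :=
    Nat.card_congr (T.toAddMonoidHom.fiberEquivKer v₀)
  rw [hfiber, natCard_eq_pow_finrank (K := K), ← pow_add, add_comm, finrank_range_add_finrank_ker]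

end LinearMap

theorem associated_lcm_of_gcd_mul_eq {α ι : Type*} [CommMonoidWithZero α] [NormalizedGCDMonoid α]
    (s : Finset ι) {N H : α} {D E f h : ι → α} (hN : N ≠ 0)
    (hDE : ∀ i ∈ s, D i * E i = N) (hh : ∀ i ∈ s, gcd (f i) (D i) * h i = D i)
    (hH : gcd N (s.gcd fun i => f i * E i) * H = N) :
    Associated H (s.lcm h) := by
  set G := gcd N (s.gcd fun i => f i * E i)
  have hG0 : G ≠ 0 := gcd_ne_zero_of_left hN
  have hdvd : ∀ i ∈ s, h i ∣ H := by
    intro i hi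
    have hGf : G ∣ f i * E i := (gcd_dvd_right _ _).trans (Finset.gcd_dvd hi)
    have hGD : G ∣ D i * E i := hDE i hi ▸ gcd_dvd_left _ _
    have hGgcd : G ∣ gcd (f i) (D i) * E i := (dvd_gcd hGf hGD).trans (gcd_mul_right' _ _ _).dvd
    refine (mul_dvd_mul_iff_left hG0).mp ?_
    calc G * h i ∣ gcd (f i) (D i) * E i * h i := mul_dvd_mul_right hGgcd _
      _ = G * H := by rw [mul_right_comm, hh i hi, hDE i hi, hH]
  have hNf : N ∣ (s.gcd fun i => f i * E i) * s.lcm h := by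
    refine (Finset.dvd_gcd fun i hi => ?_).trans (Finset.gcd_mul_right' _ _ _).dvd
    calc N = gcd (f i) (D i) * h i * E i := by rw [hh i hi, hDE i hi]
      _ ∣ f i * s.lcm h * E i :=
        mul_dvd_mul_right (mul_dvd_mul (gcd_dvd_left _ _) (Finset.dvd_lcm hi)) _
      _ = f i * E i * s.lcm h := mul_right_comm _ _ _
  have hHL : G * H ∣ G * s.lcm h :=
    hH ▸ (dvd_gcd (dvd_mul_right N _) hNf).trans (gcd_mul_right' _ _ _).dvd
  exact associated_of_dvd_dvd ((mul_dvd_mul_iff_left hG0).mp hHL) (Finset.lcm_dvd hdvd)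

theorem associated_div_gcd_lcm {R ι : Type*} [EuclideanDomain R] [NormalizedGCDMonoid R]
    (s : Finset ι) {N : R} {D f : ι → R} (hN : N ≠ 0) (hD : ∀ i ∈ s, D i ∣ N) :
    Associated (N / gcd N (s.gcd fun i => f i * N / D i))
      (s.lcm fun i => D i / gcd (f i) (D i)) := by
  have hD0 : ∀ i ∈ s, D i ≠ 0 := fun i hi h0 => hN (zero_dvd_iff.mp (h0 ▸ hD i hi))
  have hfE : (s.gcd fun i => f i * N / D i) = s.gcd fun i => f i * (N / D i) :=
    Finset.gcd_congr rfl fun i hi => EuclideanDomain.mul_div_assoc _ (hD i hi)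
  rw [hfE]
  exact associated_lcm_of_gcd_mul_eq s hN
    (fun i hi => EuclideanDomain.mul_div_cancel' (hD0 i hi) (hD i hi))
    (fun i hi =>
      EuclideanDomain.mul_div_cancel' (gcd_ne_zero_of_right (hD0 i hi)) (gcd_dvd_right _ _))
    (EuclideanDomain.mul_div_cancel' (gcd_ne_zero_of_left hN) (gcd_dvd_left _ _))

namespace qAssoc

variable (F : Type*) [Field F] [Fintype F]

local notation "F̄" => AlgebraicClosure F
local notation "q" => Fintype.card F

noncomputable abbrev frobenius : Module.End F F̄ := (FiniteField.frobeniusAlgHom F F̄).toLinearMap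

variable {F}

theorem frobenius_pow_apply (n : ℕ) (α : F̄) : (frobenius F ^ n) α = α ^ q ^ n := by
  rw [Module.End.pow_apply, AlgHom.coe_toLinearMap, FiniteField.coe_frobeniusAlgHom, pow_iterate]

theorem eq_aeval_frobenius (f : F[X]) (α : F̄) : qAssoc F f α = aeval (frobenius F) f α := by
  rw [qAssoc, aeval_def, eval₂_eq_sum, Polynomial.sum_def, LinearMap.sum_apply]
  refine Finset.sum_congr rfl fun i _ => ?_
  rw [Module.End.mul_apply, Module.algebraMap_end_apply, frobenius_pow_apply, Algebra.smul_def]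

theorem mem_ker_aeval_frobenius_X_pow_sub_one {n : ℕ} {α : F̄} :
    α ∈ ker (aeval (frobenius F) ((X : F[X]) ^ n - 1)) ↔ α ^ q ^ n = α := by
  rw [mem_ker, map_sub, map_pow, aeval_X, map_one, LinearMap.sub_apply, frobenius_pow_apply,
    Module.End.one_apply, sub_eq_zero]

noncomputable def linearized (g : F[X]) : F̄[X] :=
  ∑ i ∈ g.support, C (algebraMap F F̄ (g.coeff i)) * X ^ q ^ i

theorem eval_linearized (g : F[X]) (α : F̄) : (linearized g).eval α = qAssoc F g α := by
  simp [linearized, qAssoc, eval_finsetSum]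

theorem coeff_linearized_card_pow (g : F[X]) (i : ℕ) :
    (linearized g).coeff (q ^ i) = algebraMap F F̄ (g.coeff i) := by
  by_cases hi : g.coeff i = 0 <;>
    simp [linearized, finsetSum_coeff, (Nat.pow_right_injective Fintype.one_lt_card).eq_iff, hi]

theorem natDegree_linearized {g : F[X]} (hg : g ≠ 0) :
    (linearized g).natDegree = q ^ g.natDegree := by
  refine natDegree_eq_of_le_of_coeff_ne_zero ?_ ?_
  · refine natDegree_sum_le_of_forall_le _ _ fun i hi => (natDegree_C_mul_X_pow_le _ _).trans ?_
    exact Nat.pow_le_pow_right Fintype.card_pos (le_natDegree_of_mem_supp i hi)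
  · simpa [coeff_linearized_card_pow] using hg

theorem derivative_linearized (g : F[X]) :
    derivative (linearized g) = C (algebraMap F F̄ (g.coeff 0)) := by
  have hq : (q : F̄) = 0 := by
    rw [← map_natCast (algebraMap F F̄), FiniteField.cast_card_eq_zero, map_zero]
  rw [linearized, derivative_sum, Finset.sum_eq_single 0]
  · simp
  · intro i _ hi
    simp [derivative_X_pow, hq, hi]
  · intro h
    simp [notMem_support_iff.mp h]

theorem separable_linearized {g : F[X]} (hg : ¬ X ∣ g) : (linearized g).Separable := by
  have hc : algebraMap F F̄ (g.coeff 0) ≠ 0 := by simpa [X_dvd_iff] using hg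
  rw [separable_def, derivative_linearized]
  exact ⟨0, C (algebraMap F F̄ (g.coeff 0))⁻¹, by simp [← C_mul, hc]⟩

theorem coe_ker_aeval_frobenius {g : F[X]} (hg : g ≠ 0) :
    (ker (aeval (frobenius F) g) : Set F̄) = (linearized g).rootSet F̄ := by
  ext α
  have hne : linearized g ≠ 0 :=
    ne_zero_of_natDegree_gt (natDegree_linearized hg ▸ pow_pos Fintype.card_pos _)
  simp [mem_rootSet, hne, ← eq_aeval_frobenius, eval_linearized]

theorem finiteDimensional_ker_aeval_frobenius {g : F[X]} (hg : g ≠ 0) :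
    FiniteDimensional F (ker (aeval (frobenius F) g)) :=
  have : Finite (ker (aeval (frobenius F) g)) :=
    Set.Finite.to_subtype ((coe_ker_aeval_frobenius hg).symm ▸ rootSet_finite _ _)
  Module.Finite.of_finite

theorem finrank_ker_aeval_frobenius {g : F[X]} (hg : ¬ X ∣ g) :
    finrank F (ker (aeval (frobenius F) g)) = g.natDegree := by
  have hg0 := ne_zero_of_not_X_dvd hg
  have := finiteDimensional_ker_aeval_frobenius hg0
  have hcard : Nat.card (ker (aeval (frobenius F) g)) = q ^ g.natDegree := by
    rw [← natDegree_linearized hg0, ← card_rootSet_eq_natDegree (separable_linearized hg)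
      (IsAlgClosed.splits ((linearized g).map (algebraMap F̄ F̄))), ← Nat.card_eq_fintype_card]
    exact Nat.card_congr (Equiv.setCongr (coe_ker_aeval_frobenius hg0))
  rw [natCard_eq_pow_finrank (K := F), Nat.card_eq_fintype_card] at hcard
  exact Nat.pow_right_injective Fintype.one_lt_card hcard

theorem natCard_solutions_mul_pow_finrank {ι : Type*} [Fintype ι] (f D : ι → F[X])
    (hD : ∀ i, ¬ X ∣ D i) {b : F̄}
    (hb : b ∈ ⨆ i, (ker (aeval (frobenius F) (D i))).map (aeval (frobenius F) (f i))) :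
    Nat.card {z : ι → F̄ // (∀ i, z i ∈ ker (aeval (frobenius F) (D i))) ∧
        ∑ i, aeval (frobenius F) (f i) (z i) = b} *
      q ^ finrank F ↥(⨆ i, (ker (aeval (frobenius F) (D i))).map (aeval (frobenius F) (f i))) =
      q ^ ∑ i, (D i).natDegree := by
  let S (i : ι) := ker (aeval (frobenius F) (D i))
  have (i : ι) : FiniteDimensional F (S i) :=
    finiteDimensional_ker_aeval_frobenius (ne_zero_of_not_X_dvd (hD i))
  let T : (∀ i, S i) →ₗ[F] F̄ := ∑ i, ((aeval (frobenius F) (f i)).comp (S i).subtype).comp (proj i)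
  have hT : range T = ⨆ i, Submodule.map (aeval (frobenius F) (f i)) (S i) := by
    simp only [T, range_sum_comp_proj, range_comp, Submodule.range_subtype]
  let e : {z : ι → F̄ // (∀ i, z i ∈ S i) ∧ ∑ i, aeval (frobenius F) (f i) (z i) = b} ≃
      {v // T v = b} :=
    { toFun z := ⟨fun i => ⟨z.1 i, z.2.1 i⟩, by simpa [T] using z.2.2⟩
      invFun v := ⟨fun i => v.1 i, fun i => (v.1 i).2, by simpa [T] using v.2⟩
      left_inv _ := rfl
      right_inv _ := rfl }
  rw [Nat.card_congr e, ← hT, ← Nat.card_eq_fintype_card,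
    natCard_fiber_mul_pow_finrank_range T (hT ▸ hb), finrank_pi_fintype,
    Finset.sum_congr rfl fun i _ => finrank_ker_aeval_frobenius (hD i)]

variable [DecidableEq F]

theorem ker_aeval_frobenius_lcm {N u v : F[X]} (hN : ¬ X ∣ N) (hu : u ∣ N) (hv : v ∣ N) :
    ker (aeval (frobenius F) (lcm u v)) =
      ker (aeval (frobenius F) u) ⊔ ker (aeval (frobenius F) v) := by
  have hX {p : F[X]} (hp : p ∣ N) : ¬ X ∣ p := fun hXp => hN (hXp.trans hp)
  have hlcm : lcm u v ∣ N := lcm_dvd hu hv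
  have := finiteDimensional_ker_aeval_frobenius (ne_zero_of_not_X_dvd (hX hu))
  have := finiteDimensional_ker_aeval_frobenius (ne_zero_of_not_X_dvd (hX hv))
  have := finiteDimensional_ker_aeval_frobenius (ne_zero_of_not_X_dvd (hX hlcm))
  have hdim := Submodule.finrank_sup_add_finrank_inf_eq
    (ker (aeval (frobenius F) u)) (ker (aeval (frobenius F) v))
  rw [← ker_aeval_gcd, finrank_ker_aeval_frobenius (hX hu), finrank_ker_aeval_frobenius (hX hv),
    finrank_ker_aeval_frobenius (hX ((gcd_dvd_left u v).trans hu)),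
    ← natDegree_gcd_add_natDegree_lcm (ne_zero_of_not_X_dvd (hX hu))
      (ne_zero_of_not_X_dvd (hX hv))] at hdim
  refine (Submodule.eq_of_le_of_finrank_le
    (sup_le (ker_aeval_le_ker_aeval_of_dvd _ (dvd_lcm_left u v))
      (ker_aeval_le_ker_aeval_of_dvd _ (dvd_lcm_right u v))) ?_).symm
  rw [finrank_ker_aeval_frobenius (hX hlcm)]
  omega

theorem ker_aeval_frobenius_finset_lcm {ι : Type*} (s : Finset ι) {N : F[X]} {h : ι → F[X]}
    (hN : ¬ X ∣ N) (hh : ∀ i ∈ s, h i ∣ N) :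
    ker (aeval (frobenius F) (s.lcm h)) = ⨆ i ∈ s, ker (aeval (frobenius F) (h i)) := by
  classical
  induction s using Finset.induction_on with
  | empty => simp [Module.End.one_eq_id]
  | insert a s ha ih =>
    rw [Finset.forall_mem_insert] at hh
    rw [Finset.lcm_insert, Finset.iSup_insert,
      ker_aeval_frobenius_lcm hN hh.1 (Finset.lcm_dvd hh.2), ih hh.2]

theorem map_ker_aeval_frobenius (f : F[X]) {D : F[X]} (hD : ¬ X ∣ D) :
    (ker (aeval (frobenius F) D)).map (aeval (frobenius F) f) =
      ker (aeval (frobenius F) (D / gcd f D)) := by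
  set φ := frobenius F
  set g := gcd f D with hg
  set h := D / g
  have hD0 := ne_zero_of_not_X_dvd hD
  have hg0 : g ≠ 0 := gcd_ne_zero_of_right hD0
  have hgh : g * h = D := EuclideanDomain.mul_div_cancel' hg0 (gcd_dvd_right f D)
  have hh0 : h ≠ 0 := right_ne_zero_of_mul (hgh ▸ hD0)
  have hle : (ker (aeval φ D)).map (aeval φ f) ≤ ker (aeval φ h) := by
    rintro _ ⟨x, hx, rfl⟩
    obtain ⟨w, hw⟩ : g ∣ f := gcd_dvd_left f D
    have hfD : h * f = w * D := by rw [hw, ← hgh]; ring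
    rw [mem_ker, ← Module.End.mul_apply, ← map_mul, hfD, map_mul, Module.End.mul_apply,
      mem_ker.mp hx, map_zero]
  have := finiteDimensional_ker_aeval_frobenius hD0
  have := finiteDimensional_ker_aeval_frobenius hh0
  have hrn := ((aeval φ f).domRestrict (ker (aeval φ D))).finrank_range_add_finrank_ker
  rw [range_domRestrict, ker_domRestrict, ← Submodule.finrank_map_subtype_eq,
    Submodule.map_comap_subtype, inf_comm, ← ker_aeval_gcd,
    finrank_ker_aeval_frobenius fun hX => hD (hX.trans (gcd_dvd_right f D)),
    finrank_ker_aeval_frobenius hD, ← hg] at hrn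
  have hdeg : g.natDegree + h.natDegree = D.natDegree := by rw [← natDegree_mul hg0 hh0, hgh]
  refine Submodule.eq_of_le_of_finrank_le hle ?_
  rw [finrank_ker_aeval_frobenius fun hX => hD (hX.trans (Dvd.intro_left g hgh))]
  omega

theorem iSup_map_ker_aeval_frobenius {ι : Type*} [Fintype ι] (f D : ι → F[X]) {N : F[X]}
    (hN : ¬ X ∣ N) (hDN : ∀ i, D i ∣ N) :
    ⨆ i, (ker (aeval (frobenius F) (D i))).map (aeval (frobenius F) (f i)) =
      ker (aeval (frobenius F) (N / gcd N (Finset.univ.gcd fun i => f i * N / D i))) := by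
  rw [ker_aeval_eq_of_associated _
      (associated_div_gcd_lcm Finset.univ (ne_zero_of_not_X_dvd hN) fun i _ => hDN i),
    ker_aeval_frobenius_finset_lcm _ hN
      fun i _ => (EuclideanDomain.div_dvd_of_dvd (gcd_dvd_right _ _)).trans (hDN i)]
  simp only [Finset.mem_univ, iSup_pos]
  exact iSup_congr fun i => map_ker_aeval_frobenius (f i) fun hX => hN (hX.trans (hDN i))

end qAssoc

theorem linear_equation_count_general
    (F : Type*) [Field F] [Fintype F] [DecidableEq F]
    (q : ℕ) (hq : q = Fintype.card F)
    {k : ℕ} (f : Fin k → Polynomial F)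
    (d : Fin k → ℕ)
    (b : AlgebraicClosure F)
    (ℓ : ℕ) (hℓ : 0 < ℓ) (hdvd : ∀ i, d i ∣ ℓ)
    (G H : Polynomial F)
    (hG : G = gcd ((X : Polynomial F) ^ ℓ - 1)
      (Finset.univ.gcd fun i => f i * ((X : Polynomial F) ^ ℓ - 1) / ((X : Polynomial F) ^ (d i) - 1)))
    (hH : H = ((X : Polynomial F) ^ ℓ - 1) / G)
    (hb : qAssoc F H b = 0) :
    (Nat.card {z : Fin k → AlgebraicClosure F //
        (∀ i, z i ^ q ^ (d i) = z i) ∧ ∑ i, qAssoc F (f i) (z i) = b} : ℚ) =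
      (q : ℚ) ^ ((∑ i, (d i : ℤ)) - (H.natDegree : ℤ)) := by
  subst hq
  have hN : ¬ X ∣ (X : F[X]) ^ ℓ - 1 := by simp [X_dvd_iff, hℓ.ne]
  have hDN (i : Fin k) : (X : F[X]) ^ d i - 1 ∣ X ^ ℓ - 1 := by
    obtain ⟨m, hm⟩ := hdvd i
    simpa [hm, pow_mul] using sub_dvd_pow_sub_pow ((X : F[X]) ^ d i) 1 m
  have hXH : ¬ X ∣ H := fun hX =>
    hN (hX.trans (hH ▸ EuclideanDomain.div_dvd_of_dvd (hG ▸ gcd_dvd_left _ _)))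
  have hrange := qAssoc.iSup_map_ker_aeval_frobenius f (fun i => (X : F[X]) ^ d i - 1) hN hDN
  rw [← hG, ← hH] at hrange
  have hcount := qAssoc.natCard_solutions_mul_pow_finrank f (fun i => (X : F[X]) ^ d i - 1)
    (fun i hX => hN (hX.trans (hDN i))) (b := b)
    (by rw [hrange, mem_ker, ← qAssoc.eq_aeval_frobenius]; exact hb)
  have hdeg (i : Fin k) : ((X : F[X]) ^ d i - 1).natDegree = d i := by
    rw [← C_1, natDegree_X_pow_sub_C]
  rw [hrange, qAssoc.finrank_ker_aeval_frobenius hXH] at hcount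
  simp only [hdeg, qAssoc.mem_ker_aeval_frobenius_X_pow_sub_one, ← qAssoc.eq_aeval_frobenius]
    at hcount
  rw [← Nat.cast_sum, zpow_sub₀ (by positivity), zpow_natCast, zpow_natCast,
    eq_div_iff (by positivity)]
  exact_mod_cast hcount

/-- **Theorem 1 (counting part).** For nonzero `f₁, …, f_k ∈ F_q[x]`, positive integers
`d₁, …, d_k`, `b` in the algebraic closure of `F_q`, and `ℓ` divisible by each `dᵢ`, with
`G_ℓ = gcd(x^ℓ - 1, f₁(x)(x^ℓ-1)/(x^{d₁}-1), …)` and `H_ℓ = (x^ℓ-1)/G_ℓ`: if `L_{H_ℓ}(b) = 0`,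
then the number of solutions of `L_{f₁}(x₁) + ⋯ + L_{f_k}(x_k) = b` with `zᵢ ∈ F_{q^{dᵢ}}`
equals `q^(d₁ + ⋯ + d_k - deg H_ℓ)`. -/
theorem linear_equation_count
    (F : Type*) [Field F] [Fintype F] [DecidableEq F]
    (q : ℕ) (hq : q = Fintype.card F)
    {k : ℕ} (f : Fin k → Polynomial F) (hf : ∀ i, f i ≠ 0)
    (d : Fin k → ℕ) (hd : ∀ i, 0 < d i)
    (b : AlgebraicClosure F)
    (ℓ : ℕ) (hℓ : 0 < ℓ) (hdvd : ∀ i, d i ∣ ℓ)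
    (G H : Polynomial F)
    (hG : G = gcd ((X : Polynomial F) ^ ℓ - 1)
      (Finset.univ.gcd fun i => f i * ((X : Polynomial F) ^ ℓ - 1) / ((X : Polynomial F) ^ (d i) - 1)))
    (hH : H = ((X : Polynomial F) ^ ℓ - 1) / G)
    (hb : qAssoc F H b = 0) :
    (Nat.card {z : Fin k → AlgebraicClosure F //
        (∀ i, z i ^ q ^ (d i) = z i) ∧ ∑ i, qAssoc F (f i) (z i) = b} : ℚ) =
      (q : ℚ) ^ ((∑ i, (d i : ℤ)) - (H.natDegree : ℤ)) :=
  linear_equation_count_general F q hq f d b ℓ hℓ hdvd G H hG hH hb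
end

section
/- Let q be a prime power, let β be an element of the algebraic closure of F_q, let g ∈ F_q[x], and set α = L_g(β). Then m_{α,q} = m_{β,q} / gcd(m_{β,q}, g). -/
/-!
`L_f(α) = f(φ)(α)`, where `φ` is the `q`-power Frobenius viewed as an `F`-linear endomorphism of
the algebraic closure, so `L_{hg}(β) = L_h(L_g(β))`. Hence `L_h(α) = 0` iff `m_β ∣ h g`, and with
`d = gcd(m_β, g)`, cancelling `d` and using that `m_β / d` and `g / d` are coprime, this holds iff
`m_β / d ∣ h`. Both `m_α` and `m_β / d` are monic generators of the same ideal.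
-/

open Polynomial

theorem dvd_mul_iff_div_gcd_dvd {R : Type*} [EuclideanDomain R] [GCDMonoid R] {m g : R}
    (hmg : gcd m g ≠ 0) (h : R) : m ∣ h * g ↔ m / gcd m g ∣ h := by
  set d := gcd m g
  have hm : d * (m / d) = m := EuclideanDomain.mul_div_cancel' hmg (gcd_dvd_left m g)
  have hg : d * (g / d) = g := EuclideanDomain.mul_div_cancel' hmg (gcd_dvd_right m g)
  have hcop : IsCoprime (m / d) (g / d) := isCoprime_div_gcd_div_gcd_of_gcd_ne_zero hmg
  conv_lhs => rw [← hm, ← hg, mul_left_comm, mul_dvd_mul_iff_left hmg]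
  exact ⟨hcop.dvd_of_dvd_mul_right, fun hdvd => dvd_mul_of_dvd_left hdvd _⟩

namespace Polynomial

theorem Monic.div_gcd {F : Type*} [Field F] [DecidableEq F] {m : F[X]} (hm : m.Monic)
    (g : F[X]) : (m / gcd m g).Monic := by
  have hd : gcd m g ≠ 0 := gcd_ne_zero_of_left hm.ne_zero
  have hd_monic : (gcd m g).Monic := normalize_gcd m g ▸ monic_normalize hd
  exact hd_monic.of_mul_monic_left (by rwa [EuclideanDomain.mul_div_cancel' hd (gcd_dvd_left m g)])

theorem Monic.eq_of_forall_dvd_iff {R : Type*} [CommRing R] [IsDomain R] {p q : R[X]}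
    (hp : p.Monic) (hq : q.Monic) (h : ∀ r, p ∣ r ↔ q ∣ r) : p = q :=
  eq_of_monic_of_associated hp hq (associated_of_dvd_dvd ((h q).2 dvd_rfl) ((h p).1 dvd_rfl))

end Polynomial

section qAssoc

variable (F : Type*) [Field F] [Fintype F]

theorem qAssoc_eq_aeval_frobenius (f : F[X]) (α : AlgebraicClosure F) :
    qAssoc F f α = aeval (FiniteField.frobeniusAlgHom F (AlgebraicClosure F)).toLinearMap f α := by
  rw [aeval_def, eval₂_eq_sum, Polynomial.sum, qAssoc, LinearMap.sum_apply]
  simp [Module.End.pow_apply, FiniteField.coe_frobeniusAlgHom, pow_iterate, Algebra.smul_def]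

theorem qAssoc_mul (h g : F[X]) (β : AlgebraicClosure F) :
    qAssoc F (h * g) β = qAssoc F h (qAssoc F g β) := by
  simp only [qAssoc_eq_aeval_frobenius, map_mul, Module.End.mul_apply]

end qAssoc

/-- **Lemma 6.** Let `β` be in the algebraic closure of `F_q`, `g ∈ F_q[x]` and `α = L_g(β)`.
Then `m_{α,q} = m_{β,q} / gcd(m_{β,q}, g)`, where `m_{γ,q}` denotes the monic generator of the
ideal `{h ∈ F_q[x] : L_h(γ) = 0}`. -/
theorem annihilator_of_image
    (F : Type*) [Field F] [Fintype F] [DecidableEq F]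
    (β : AlgebraicClosure F) (g : Polynomial F)
    (α : AlgebraicClosure F) (hα : α = qAssoc F g β)
    (mβ : Polynomial F) (hmβ : mβ.Monic)
    (hgenβ : ∀ h : Polynomial F, qAssoc F h β = 0 ↔ mβ ∣ h)
    (mα : Polynomial F) (hmα : mα.Monic)
    (hgenα : ∀ h : Polynomial F, qAssoc F h α = 0 ↔ mα ∣ h) :
    mα = mβ / gcd mβ g := by
  refine hmα.eq_of_forall_dvd_iff (hmβ.div_gcd g) fun h => ?_
  rw [← hgenα, hα, ← qAssoc_mul, hgenβ,
    dvd_mul_iff_div_gcd_dvd (gcd_ne_zero_of_left hmβ.ne_zero)]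
end

section
/- Let q be a prime power, let n be a positive integer, let m be a divisor of n, and let β ∈ F_{q^n} be a normal element over F_q. Then every element of F_{q^m} is written uniquely as L_{((x^n−1)/(x^m−1))·h(x)}(β) for some polynomial h ∈ F_q[x] that is either constant or has degree at most m − 1. -/
open Polynomial

/-- `β ∈ F_{q^n}` is a normal element over `F_q` if `β, β^q, …, β^{q^{n-1}}` form an `F_q`-basis
of `F_{q^n}` (the subfield `{x | x^{q^n} = x}` of the algebraic closure). -/
def IsNormalElement (F : Type*) [Field F] [Fintype F] (n : ℕ) (β : AlgebraicClosure F) : Prop :=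
  LinearIndependent F (fun i : Fin n => β ^ (Fintype.card F) ^ (i : ℕ)) ∧
    (Submodule.span F (Set.range fun i : Fin n => β ^ (Fintype.card F) ^ (i : ℕ)) :
        Set (AlgebraicClosure F)) =
      {x : AlgebraicClosure F | x ^ (Fintype.card F) ^ n = x}


/-! Write `g = (Xⁿ - 1) / (Xᵐ - 1)`. Since `L_{X^k f}(β) = L_f(β)^(q^k)`, the identity
`(Xᵐ - 1) g = Xⁿ - 1` and `β^(qⁿ) = β` show that `h ↦ L_{g h}(β)` maps the polynomials of degree
`< m` into `F_{q^m}`. This map is injective: `g h` has degree `< n`, and `β, β^q, …, β^(q^(n-1))`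
are linearly independent. The domain has `q^m` elements and `F_{q^m}`, the set of roots of
`X^(q^m) - X`, at most `q^m`, so the map is a bijection. -/

section General

variable {R : Type*} [CommRing R]

lemma natDegree_mul_lt_of_mul_eq [IsDomain R] {p q r h : R[X]} (hqr : q * r = p) (hp : p ≠ 0)
    (hh : h.natDegree < q.natDegree) : (r * h).natDegree < p.natDegree := by
  have hq : q ≠ 0 := left_ne_zero_of_mul (hqr ▸ hp)
  have hr : r ≠ 0 := right_ne_zero_of_mul (hqr ▸ hp)
  calc (r * h).natDegree ≤ r.natDegree + h.natDegree := natDegree_mul_le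
    _ < r.natDegree + q.natDegree := by omega
    _ = p.natDegree := by rw [← hqr, natDegree_mul hq hr, add_comm]

lemma mem_degreeLT_iff_natDegree_lt {m : ℕ} (hm : 0 < m) {p : R[X]} :
    p ∈ degreeLT R m ↔ p.natDegree < m := by
  rcases eq_or_ne p 0 with rfl | hp
  · simp [hm]
  · rw [mem_degreeLT, natDegree_lt_iff_degree_lt hp]

variable {L : Type*} [Field L] {N : ℕ}

lemma setOf_pow_eq_self_eq_rootSet (hN : 1 < N) :
    {x : L | x ^ N = x} = (X ^ N - X : L[X]).rootSet L := by
  have hne : (X ^ N - X : L[X]) ≠ 0 :=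
    ne_zero_of_natDegree_gt (n := 0) (by rw [FiniteField.X_pow_card_sub_X_natDegree_eq L hN]; omega)
  ext x
  simp [mem_rootSet, hne, sub_eq_zero]

lemma finite_setOf_pow_eq_self (hN : 1 < N) : {x : L | x ^ N = x}.Finite := by
  rw [setOf_pow_eq_self_eq_rootSet hN]
  exact rootSet_finite _ _

lemma ncard_setOf_pow_eq_self_le (hN : 1 < N) : {x : L | x ^ N = x}.ncard ≤ N := by
  rw [setOf_pow_eq_self_eq_rootSet hN]
  exact (ncard_rootSet_le _ _).trans (FiniteField.X_pow_card_sub_X_natDegree_eq L hN).le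

variable {K : Type*} [Field K]

lemma X_pow_sub_one_mul_div {m n : ℕ} (hm : m ∣ n) :
    (X ^ m - 1 : K[X]) * ((X ^ n - 1) / (X ^ m - 1)) = X ^ n - 1 := by
  obtain ⟨k, rfl⟩ := hm
  have hdvd := pow_one_sub_dvd_pow_mul_sub_one (X : K[X]) m k
  rcases eq_or_ne (X ^ m - 1 : K[X]) 0 with h | h
  · rw [h, zero_mul]
    exact (zero_dvd_iff.1 (h ▸ hdvd)).symm
  · exact EuclideanDomain.mul_div_cancel' h hdvd

lemma natDegree_X_pow_sub_one (n : ℕ) : (X ^ n - 1 : K[X]).natDegree = n := by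
  simpa using natDegree_X_pow_sub_C (n := n) (r := (1 : K))

lemma X_pow_sub_one_ne_zero {n : ℕ} (hn : 0 < n) : (X ^ n - 1 : K[X]) ≠ 0 := by
  simpa using X_pow_sub_C_ne_zero hn (1 : K)

lemma X_pow_sub_one_div_ne_zero {m n : ℕ} (hm : m ∣ n) (hn : 0 < n) :
    ((X ^ n - 1) / (X ^ m - 1) : K[X]) ≠ 0 :=
  right_ne_zero_of_mul (a := X ^ m - 1) <| by
    rw [X_pow_sub_one_mul_div hm]
    exact X_pow_sub_one_ne_zero hn

lemma natDegree_div_mul_lt {m n : ℕ} (hm : m ∣ n) (hn : 0 < n) {h : K[X]} (hh : h.natDegree < m) :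
    ((X ^ n - 1) / (X ^ m - 1) * h).natDegree < n := by
  have := natDegree_mul_lt_of_mul_eq (X_pow_sub_one_mul_div hm) (X_pow_sub_one_ne_zero hn)
    (h := h) (by rwa [natDegree_X_pow_sub_one])
  rwa [natDegree_X_pow_sub_one] at this

lemma card_degreeLT [Fintype K] (m : ℕ) : Nat.card (degreeLT K m) = Fintype.card K ^ m := by
  rw [Nat.card_congr (degreeLTEquiv K m).toEquiv, Nat.card_fun, Nat.card_fin,
    Nat.card_eq_fintype_card]

end General

section QAssoc

variable {F : Type*} [Field F] [Fintype F]

noncomputable def qAssocLinearMap (β : AlgebraicClosure F) : F[X] →ₗ[F] AlgebraicClosure F :=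
  lsum fun i => LinearMap.toSpanSingleton F _ (β ^ Fintype.card F ^ i)

lemma qAssocLinearMap_apply (β : AlgebraicClosure F) (f : F[X]) :
    qAssocLinearMap β f = qAssoc F f β := by
  simp [qAssocLinearMap, qAssoc, Polynomial.sum_def, Algebra.smul_def]

lemma qAssoc_sub (f g : F[X]) (β : AlgebraicClosure F) :
    qAssoc F (f - g) β = qAssoc F f β - qAssoc F g β := by
  simp only [← qAssocLinearMap_apply, map_sub]

lemma qAssoc_monomial (i : ℕ) (a : F) (β : AlgebraicClosure F) :
    qAssoc F (monomial i a) β = a • β ^ Fintype.card F ^ i := by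
  simp [← qAssocLinearMap_apply, qAssocLinearMap]

lemma map_qAssoc (φ : AlgebraicClosure F →ₐ[F] AlgebraicClosure F) (f : F[X])
    (β : AlgebraicClosure F) : φ (qAssoc F f β) = qAssoc F f (φ β) := by
  simp [qAssoc, map_sum, map_mul, map_pow]

lemma qAssoc_pow_card_pow (f : F[X]) (β : AlgebraicClosure F) (k : ℕ) :
    qAssoc F f β ^ Fintype.card F ^ k = qAssoc F f (β ^ Fintype.card F ^ k) := by
  induction k with
  | zero => simp
  | succ k ih =>
    rw [pow_succ, pow_mul, pow_mul, ih, ← FiniteField.frobeniusAlgHom_apply, map_qAssoc,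
      FiniteField.frobeniusAlgHom_apply]

lemma qAssoc_X_pow_mul (k : ℕ) (f : F[X]) (β : AlgebraicClosure F) :
    qAssoc F (X ^ k * f) β = qAssoc F f (β ^ Fintype.card F ^ k) := by
  suffices (qAssocLinearMap β).comp (LinearMap.mulLeft F (X ^ k)) =
      qAssocLinearMap (β ^ Fintype.card F ^ k) by
    simpa [qAssocLinearMap_apply] using LinearMap.congr_fun this f
  refine lhom_ext' fun i => LinearMap.ext fun a => ?_
  simp only [LinearMap.comp_apply, LinearMap.mulLeft_apply, X_pow_mul_monomial,
    qAssocLinearMap_apply, qAssoc_monomial, ← pow_mul, ← pow_add, add_comm]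

lemma qAssoc_X_pow_sub_one_mul (k : ℕ) (f : F[X]) (β : AlgebraicClosure F) :
    qAssoc F ((X ^ k - 1) * f) β = qAssoc F f β ^ Fintype.card F ^ k - qAssoc F f β := by
  rw [sub_mul, one_mul, qAssoc_sub, qAssoc_X_pow_mul, qAssoc_pow_card_pow]

lemma qAssoc_eq_sum_fin {n : ℕ} {f : F[X]} (hf : f.natDegree < n) (β : AlgebraicClosure F) :
    qAssoc F f β = ∑ i : Fin n, f.coeff i • β ^ Fintype.card F ^ (i : ℕ) := by
  rw [← qAssocLinearMap_apply, qAssocLinearMap, lsum_apply,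
    sum_over_range' _ (fun _ => map_zero _) n hf,
    Fin.sum_univ_eq_sum_range (fun i => f.coeff i • β ^ Fintype.card F ^ i)]
  simp

lemma eq_zero_of_qAssoc_eq_zero {n : ℕ} {β : AlgebraicClosure F}
    (hβ : LinearIndependent F fun i : Fin n => β ^ Fintype.card F ^ (i : ℕ)) {f : F[X]}
    (hf : f.natDegree < n) (h0 : qAssoc F f β = 0) : f = 0 := by
  rw [qAssoc_eq_sum_fin hf] at h0
  have hcoeff := Fintype.linearIndependent_iff.1 hβ _ h0
  ext i
  rcases lt_or_ge i n with hi | hi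
  · exact hcoeff ⟨i, hi⟩
  · exact coeff_eq_zero_of_natDegree_lt (hf.trans_le hi)

variable {m n : ℕ} {β : AlgebraicClosure F}

lemma qAssoc_div_mul_pow_card_pow_eq_self (hm : m ∣ n) (hβ : β ^ Fintype.card F ^ n = β)
    (h : F[X]) :
    qAssoc F ((X ^ n - 1) / (X ^ m - 1) * h) β ^ Fintype.card F ^ m =
      qAssoc F ((X ^ n - 1) / (X ^ m - 1) * h) β := by
  rw [← sub_eq_zero, ← qAssoc_X_pow_sub_one_mul, ← mul_assoc, X_pow_sub_one_mul_div hm,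
    qAssoc_X_pow_sub_one_mul, qAssoc_pow_card_pow, hβ, sub_self]

lemma eq_of_qAssoc_div_mul_eq (hm : m ∣ n) (hn : 0 < n)
    (hβ : LinearIndependent F fun i : Fin n => β ^ Fintype.card F ^ (i : ℕ)) {h₁ h₂ : F[X]}
    (hh₁ : h₁.natDegree < m) (hh₂ : h₂.natDegree < m)
    (heq : qAssoc F ((X ^ n - 1) / (X ^ m - 1) * h₁) β =
      qAssoc F ((X ^ n - 1) / (X ^ m - 1) * h₂) β) : h₁ = h₂ := by
  have hzero := eq_zero_of_qAssoc_eq_zero hβ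
    (natDegree_div_mul_lt hm hn ((natDegree_sub_le _ _).trans_lt (max_lt hh₁ hh₂)))
    (by rw [mul_sub, qAssoc_sub, heq, sub_self])
  exact sub_eq_zero.1 ((mul_eq_zero.1 hzero).resolve_left (X_pow_sub_one_div_ne_zero hm hn))

end QAssoc

theorem subfield_unique_representation_general
    (F : Type*) [Field F] [Fintype F]
    (q : ℕ) (hq : q = Fintype.card F)
    (n : ℕ) (hn : 0 < n) (m : ℕ) (hm : m ∣ n)
    (β : AlgebraicClosure F) (hβmem : β ^ q ^ n = β) (hβ : IsNormalElement F n β) :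
    ∀ α : AlgebraicClosure F, α ^ q ^ m = α →
      ∃! h : Polynomial F, h.natDegree < m ∧
        qAssoc F ((((X : Polynomial F) ^ n - 1) / ((X : Polynomial F) ^ m - 1)) * h) β = α := by
  subst hq
  intro α hα
  have hm0 : 0 < m := Nat.pos_of_dvd_of_pos hm hn
  have hN : 1 < Fintype.card F ^ m := Nat.one_lt_pow hm0.ne' Fintype.one_lt_card
  have := (finite_setOf_pow_eq_self (L := AlgebraicClosure F) hN).to_subtype
  let Φ : degreeLT F m → {x : AlgebraicClosure F | x ^ Fintype.card F ^ m = x} := fun h =>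
    ⟨qAssoc F ((X ^ n - 1) / (X ^ m - 1) * (h : F[X])) β,
      qAssoc_div_mul_pow_card_pow_eq_self hm hβmem (h : F[X])⟩
  have hΦ : Φ.Bijective := by
    refine Function.Injective.bijective_of_nat_card_le (fun h₁ h₂ heq => Subtype.ext ?_) ?_
    · exact eq_of_qAssoc_div_mul_eq hm hn hβ.1 ((mem_degreeLT_iff_natDegree_lt hm0).1 h₁.2)
        ((mem_degreeLT_iff_natDegree_lt hm0).1 h₂.2) (congrArg Subtype.val heq)
    · rw [Nat.card_coe_set_eq, card_degreeLT]
      exact ncard_setOf_pow_eq_self_le hN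
  obtain ⟨⟨h, hdeg⟩, hh⟩ := hΦ.2 ⟨α, hα⟩
  rw [mem_degreeLT_iff_natDegree_lt hm0] at hdeg
  refine ⟨h, ⟨hdeg, congrArg Subtype.val hh⟩, fun h' ⟨hdeg', hh'⟩ => ?_⟩
  exact eq_of_qAssoc_div_mul_eq hm hn hβ.1 hdeg' hdeg (hh'.trans (congrArg Subtype.val hh).symm)

/-- **Corollary 7.** Let `m ∣ n` and let `β ∈ F_{q^n}` be normal over `F_q`. Then every element
of `F_{q^m}` is written uniquely as `L_{((x^n-1)/(x^m-1))·h(x)}(β)` with `h ∈ F_q[x]` either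
constant or of degree at most `m - 1` (i.e. of `natDegree < m`). -/
theorem subfield_unique_representation
    (F : Type*) [Field F] [Fintype F]
    (q : ℕ) (hq : q = Fintype.card F)
    (n : ℕ) (hn : 0 < n) (m : ℕ) (hm : m ∣ n) (hm0 : 0 < m)
    (β : AlgebraicClosure F) (hβmem : β ^ q ^ n = β) (hβ : IsNormalElement F n β) :
    ∀ α : AlgebraicClosure F, α ^ q ^ m = α →
      ∃! h : Polynomial F, h.natDegree < m ∧
        qAssoc F ((((X : Polynomial F) ^ n - 1) / ((X : Polynomial F) ^ m - 1)) * h) β = α :=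
  subfield_unique_representation_general F q hq n hn m hm β hβmem hβ
end

section
/- Let q be a prime power, let n be a positive integer, let f ∈ F_q[x] be a divisor of x^n − 1, let α be an element of the algebraic closure of F_q, and let β ∈ F_{q^n} be a normal element over F_q. Then there exists a polynomial g ∈ F_q[x] such that L_{f·g}(β) = α if and only if m_{α,q}(x) divides (x^n − 1)/f(x), equivalently if and only if L_{(x^n−1)/f(x)}(α) = 0. -/
/-!
Raising to the `q`-th power is an `F_q`-linear endomorphism `φ` of the algebraic closure, and
`L_f(γ) = f(φ) γ`. A normal element `β` is a cyclic vector of `F_{q^n} = ker (φ^n - 1)` whose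
annihilator is `(x^n - 1)`, so `L_{fg}(β) = L_f(L_g(β))` ranges over `L_f(F_{q^n})`. With
`x^n - 1 = f h`: if `L_h(α) = 0` then `α ∈ F_{q^n}`, say `α = L_a(β)`, and `x^n - 1 ∣ h a` forces
`f ∣ a`; conversely `L_h(L_{fg}(β)) = L_g(L_{x^n-1}(β)) = 0`.
-/

open Polynomial

section CyclicVector

variable {K V : Type*} [Field K] [AddCommGroup V] [Module K V] (φ : Module.End K V)

theorem aeval_apply_eq_zero_iff_dvd {β : V} {T : K[X]} {n : ℕ} (hT : T.Monic)
    (hTdeg : T.natDegree = n) (hTβ : aeval φ T β = 0)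
    (hli : LinearIndependent K fun i : Fin n => (φ ^ (i : ℕ)) β) (c : K[X]) :
    aeval φ c β = 0 ↔ T ∣ c := by
  refine ⟨fun hc => ?_, fun ⟨d, hd⟩ => by rw [hd, mul_comm, map_mul, Module.End.mul_apply, hTβ,
    map_zero]⟩
  rcases eq_or_ne T 1 with rfl | hT1
  · exact one_dvd c
  set r := c %ₘ T
  have hrβ : aeval φ r β = 0 := by
    rw [← modByMonic_add_div c T, mul_comm, map_add, map_mul, LinearMap.add_apply,
      Module.End.mul_apply, hTβ, map_zero, add_zero] at hc
    exact hc
  have hr : r.natDegree < n := hTdeg ▸ natDegree_modByMonic_lt c hT hT1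
  have hsum : ∑ i : Fin n, r.coeff i • (φ ^ (i : ℕ)) β = 0 := by
    rw [Fin.sum_univ_eq_sum_range (fun i => r.coeff i • (φ ^ i) β), ← hrβ,
      aeval_eq_sum_range' hr, LinearMap.sum_apply]
    rfl
  have hcoeff := Fintype.linearIndependent_iff.mp hli _ hsum
  rw [← modByMonic_eq_zero_iff_dvd hT]
  ext i
  rcases lt_or_ge i n with hi | hi
  · simpa using hcoeff ⟨i, hi⟩
  · exact coeff_eq_zero_of_natDegree_lt (hr.trans_le hi)

theorem exists_aeval_apply_eq_of_mem_span {β α : V} {n : ℕ}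
    (hα : α ∈ Submodule.span K (Set.range fun i : Fin n => (φ ^ (i : ℕ)) β)) :
    ∃ a : K[X], aeval φ a β = α := by
  obtain ⟨c, rfl⟩ := (Submodule.mem_span_range_iff_exists_fun K).mp hα
  refine ⟨∑ i : Fin n, C (c i) * X ^ (i : ℕ), ?_⟩
  simp [LinearMap.sum_apply, Module.End.mul_apply, Module.algebraMap_end_apply]

theorem exists_aeval_mul_apply_eq_iff {β α : V} {T f h : K[X]} (hfh : f * h = T) (hh : h ≠ 0)
    (hann : ∀ c, aeval φ c β = 0 ↔ T ∣ c)
    (hgen : ∀ γ, aeval φ T γ = 0 → ∃ a : K[X], aeval φ a β = γ) :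
    (∃ g : K[X], aeval φ (f * g) β = α) ↔ aeval φ h α = 0 := by
  have aeval_mul_apply (u v : K[X]) (γ : V) : aeval φ (u * v) γ = aeval φ u (aeval φ v γ) := by
    rw [map_mul, Module.End.mul_apply]
  constructor
  · rintro ⟨g, rfl⟩
    rw [← aeval_mul_apply, (hann _).mpr]
    exact ⟨g, by rw [← hfh]; ring⟩
  · intro hα
    obtain ⟨a, rfl⟩ := hgen _ (by rw [← hfh, aeval_mul_apply, hα, map_zero])
    obtain ⟨g, hg⟩ : f ∣ a := by
      rw [← aeval_mul_apply, hann, ← hfh, mul_comm f] at hα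
      exact (mul_dvd_mul_iff_left hh).mp hα
    exact ⟨g, by rw [← hg]⟩

end CyclicVector

section Frobenius

variable (F R : Type*) [Field F] [Fintype F] [CommRing R] [Algebra F R]

theorem FiniteField.frobeniusAlgHom_toLinearMap_pow_apply_s10 (i : ℕ) (x : R) :
    ((frobeniusAlgHom F R).toLinearMap ^ i) x = x ^ Fintype.card F ^ i := by
  rw [Module.End.pow_apply]
  exact congrFun (pow_iterate _ i) x

theorem FiniteField.aeval_frobeniusAlgHom_X_pow_sub_one_apply (n : ℕ) (x : R) :
    aeval (frobeniusAlgHom F R).toLinearMap (X ^ n - 1 : F[X]) x = x ^ Fintype.card F ^ n - x := by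
  simp [frobeniusAlgHom_toLinearMap_pow_apply_s10]

theorem qAssoc_eq_aeval (f : F[X]) (γ : AlgebraicClosure F) :
    qAssoc F f γ = aeval (FiniteField.frobeniusAlgHom F (AlgebraicClosure F)).toLinearMap f γ := by
  rw [aeval_def, eval₂_eq_sum, Polynomial.sum, LinearMap.sum_apply]
  refine Finset.sum_congr rfl fun i _ => ?_
  rw [Module.End.mul_apply, FiniteField.frobeniusAlgHom_toLinearMap_pow_apply_s10,
    Module.algebraMap_end_apply, Algebra.smul_def]

end Frobenius

theorem image_of_multiples_iff_general
    (F : Type*) [Field F] [Fintype F]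
    (q : ℕ) (hq : q = Fintype.card F)
    (n : ℕ) (hn : 0 < n)
    (f : Polynomial F) (hf : f ∣ (X : Polynomial F) ^ n - 1)
    (α : AlgebraicClosure F)
    (β : AlgebraicClosure F) (hβmem : β ^ q ^ n = β) (hβ : IsNormalElement F n β)
    (mα : Polynomial F)
    (hgenα : ∀ h : Polynomial F, qAssoc F h α = 0 ↔ mα ∣ h) :
    ((∃ g : Polynomial F, qAssoc F (f * g) β = α) ↔
        mα ∣ ((X : Polynomial F) ^ n - 1) / f) ∧
      ((∃ g : Polynomial F, qAssoc F (f * g) β = α) ↔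
        qAssoc F (((X : Polynomial F) ^ n - 1) / f) α = 0) := by
  subst hq
  set φ := (FiniteField.frobeniusAlgHom F (AlgebraicClosure F)).toLinearMap
  have hT : (X ^ n - 1 : F[X]).Monic := by simpa using monic_X_pow_sub_C (1 : F) hn.ne'
  have hfh : f * ((X ^ n - 1) / f) = X ^ n - 1 :=
    EuclideanDomain.mul_div_cancel' (ne_zero_of_dvd_ne_zero hT.ne_zero hf) hf
  have hann : ∀ c : F[X], aeval φ c β = 0 ↔ X ^ n - 1 ∣ c := by
    refine aeval_apply_eq_zero_iff_dvd φ hT (by simpa using natDegree_X_pow_sub_C (r := (1 : F)))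
      (by rw [FiniteField.aeval_frobeniusAlgHom_X_pow_sub_one_apply, hβmem, sub_self]) ?_
    simpa only [φ, FiniteField.frobeniusAlgHom_toLinearMap_pow_apply_s10] using hβ.1
  have hgen : ∀ γ, aeval φ (X ^ n - 1 : F[X]) γ = 0 → ∃ a : F[X], aeval φ a β = γ := by
    intro γ hγ
    rw [FiniteField.aeval_frobeniusAlgHom_X_pow_sub_one_apply, sub_eq_zero] at hγ
    refine exists_aeval_apply_eq_of_mem_span φ (n := n) ?_
    simp only [φ, FiniteField.frobeniusAlgHom_toLinearMap_pow_apply_s10]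
    rw [← SetLike.mem_coe, hβ.2]
    exact hγ
  simp only [qAssoc_eq_aeval] at hgenα ⊢
  rw [← hgenα, and_self]
  exact exists_aeval_mul_apply_eq_iff φ hfh (right_ne_zero_of_mul (hfh ▸ hT.ne_zero)) hann hgen

/-- **Theorem 8.** Let `f ∈ F_q[x]` divide `x^n - 1`, let `α` be in the algebraic closure of
`F_q` and let `β ∈ F_{q^n}` be normal over `F_q`. Then there exists `g ∈ F_q[x]` with
`L_{f·g}(β) = α` if and only if `m_{α,q}` divides `(x^n-1)/f`, equivalently iff
`L_{(x^n-1)/f}(α) = 0`. -/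
theorem image_of_multiples_iff
    (F : Type*) [Field F] [Fintype F]
    (q : ℕ) (hq : q = Fintype.card F)
    (n : ℕ) (hn : 0 < n)
    (f : Polynomial F) (hf : f ∣ (X : Polynomial F) ^ n - 1)
    (α : AlgebraicClosure F)
    (β : AlgebraicClosure F) (hβmem : β ^ q ^ n = β) (hβ : IsNormalElement F n β)
    (mα : Polynomial F) (hmα : mα.Monic)
    (hgenα : ∀ h : Polynomial F, qAssoc F h α = 0 ↔ mα ∣ h) :
    ((∃ g : Polynomial F, qAssoc F (f * g) β = α) ↔
        mα ∣ ((X : Polynomial F) ^ n - 1) / f) ∧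
      ((∃ g : Polynomial F, qAssoc F (f * g) β = α) ↔
        qAssoc F (((X : Polynomial F) ^ n - 1) / f) α = 0) :=
  image_of_multiples_iff_general F q hq n hn f hf α β hβmem hβ mα hgenα
end

section
/- Let q be a prime power, let f_1, …, f_k ∈ F_q[x] be nonzero polynomials, and let d_1, …, d_k be positive integers. Let ℓ be any positive integer divisible by each of d_1, …, d_k, set G_ℓ(x) = gcd(x^ℓ − 1, f_1(x)(x^ℓ − 1)/(x^{d_1} − 1), …, f_k(x)(x^ℓ − 1)/(x^{d_k} − 1)) and H_ℓ(x) = (x^ℓ − 1)/G_ℓ(x). Then the sumset L_{f_1}(F_{q^{d_1}}) + ⋯ + L_{f_k}(F_{q^{d_k}}) = {L_{f_1}(a_1) + ⋯ + L_{f_k}(a_k) : a_i ∈ F_{q^{d_i}}} equals the set of roots of L_{H_ℓ} in the algebraic closure of F_q, and in particular has exactly q^{deg H_ℓ} elements. -/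
open Polynomial

theorem dvd_div_mul_of_dvd_mul_div {R : Type*} [EuclideanDomain R] {A P G f : R} (hA : A ≠ 0)
    (hPA : P ∣ A) (hGA : G ∣ A) (hG : G ∣ f * (A / P)) : P ∣ A / G * f := by
  have hG0 : G ≠ 0 := ne_zero_of_dvd_ne_zero hA hGA
  obtain ⟨u, hu⟩ := hG
  refine ⟨u, mul_left_cancel₀ hG0 ?_⟩
  calc G * (A / G * f) = f * (P * (A / P)) := by
        rw [← mul_assoc, EuclideanDomain.mul_div_cancel' hG0 hGA,
          EuclideanDomain.mul_div_cancel' (ne_zero_of_dvd_ne_zero hA hPA) hPA, mul_comm]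
    _ = G * (P * u) := by rw [mul_left_comm, hu, mul_left_comm]

theorem pow_sub_one_dvd_pow_sub_one_of_dvd {R : Type*} [CommRing R] (x : R) {m k : ℕ}
    (h : m ∣ k) : x ^ m - 1 ∣ x ^ k - 1 := by
  obtain ⟨n, rfl⟩ := h
  simpa [pow_mul] using sub_dvd_pow_sub_pow (x ^ m) 1 n

theorem coeff_zero_ne_zero_of_dvd_X_pow_sub_one {R : Type*} [CommRing R] [Nontrivial R]
    {g : R[X]} {ℓ : ℕ} (hℓ : 0 < ℓ) (hg : g ∣ X ^ ℓ - 1) : g.coeff 0 ≠ 0 := by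
  obtain ⟨u, hu⟩ := hg
  intro h
  have := congrArg (coeff · 0) hu
  simp only [mul_coeff_zero, h, zero_mul, coeff_sub, coeff_X_pow, hℓ.ne, if_false, coeff_one_zero,
    zero_sub, neg_eq_zero, one_ne_zero] at this

section Aeval
variable {K V : Type*} [Field K] [AddCommGroup V] [Module K V] (φ : Module.End K V)

theorem aeval_apply_eq_zero_of_dvd {P Q : K[X]} (hPQ : P ∣ Q) {v : V} (hv : aeval φ P v = 0) :
    aeval φ Q v = 0 := by
  obtain ⟨R, rfl⟩ := hPQ
  rw [mul_comm, map_mul, Module.End.mul_apply, hv, map_zero]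

theorem sumset_eq_ker_aeval [DecidableEq K] {ι : Type*} [Fintype ι]
    (f P : ι → K[X]) (A G H : K[X]) (hA : A ≠ 0) (hPA : ∀ i, P i ∣ A)
    (hG : G = gcd A (Finset.univ.gcd fun i => f i * A / P i)) (hH : H = A / G)
    (hsurj : Function.Surjective (aeval φ G)) :
    {v | ∃ a : ι → V, (∀ i, aeval φ (P i) (a i) = 0) ∧ v = ∑ i, aeval φ (f i) (a i)} =
      {v | aeval φ H v = 0} := by
  have hGA : G ∣ A := hG ▸ gcd_dvd_left _ _
  have hfP : ∀ i, f i * A / P i = f i * (A / P i) := fun i =>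
    EuclideanDomain.mul_div_assoc _ (hPA i)
  apply subset_antisymm
  · rintro v ⟨a, ha, rfl⟩
    rw [Set.mem_ofPred_eq, map_sum]
    refine Finset.sum_eq_zero fun i _ => ?_
    have hGi : G ∣ f i * (A / P i) := hG ▸ hfP i ▸
      (gcd_dvd_right _ _).trans (Finset.gcd_dvd (Finset.mem_univ i))
    rw [← Module.End.mul_apply, ← map_mul, hH]
    exact aeval_apply_eq_zero_of_dvd φ (dvd_div_mul_of_dvd_mul_div hA (hPA i) hGA hGi) (ha i)
  · intro v hv
    obtain ⟨y, rfl⟩ := hsurj v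
    have hy : aeval φ A y = 0 := by
      rw [← EuclideanDomain.mul_div_cancel' (ne_zero_of_dvd_ne_zero hA hGA) hGA, mul_comm,
        map_mul, Module.End.mul_apply, ← hH]
      exact hv
    obtain ⟨x, w, hxw⟩ := exists_gcd_eq_mul_add_mul A (Finset.univ.gcd fun i => f i * A / P i)
    obtain ⟨c, hc⟩ := Finset.gcd_eq_sum_mul Finset.univ fun i => f i * A / P i
    refine ⟨fun i => aeval φ (A / P i * c i * w) y, fun i => ?_, ?_⟩
    · rw [← Module.End.mul_apply, ← map_mul]
      refine aeval_apply_eq_zero_of_dvd φ ⟨c i * w, ?_⟩ hy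
      rw [← mul_assoc, ← mul_assoc,
        EuclideanDomain.mul_div_cancel' (ne_zero_of_dvd_ne_zero hA (hPA i)) (hPA i), mul_assoc]
    · have hGsum : G = x * A + ∑ i, f i * (A / P i * c i * w) := by
        rw [hG, hxw, hc, Finset.sum_mul, mul_comm A x]
        refine congrArg _ (Finset.sum_congr rfl fun i _ => ?_)
        rw [hfP]
        ring
      rw [hGsum, map_add, map_sum, LinearMap.add_apply, map_mul, Module.End.mul_apply, hy,
        map_zero, zero_add, LinearMap.sum_apply]
      simp only [map_mul, Module.End.mul_apply]

end Aeval

section Frobenius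
variable {F : Type*} [Field F] [Fintype F]

local notation "Ω" => AlgebraicClosure F

variable (F) in
noncomputable abbrev frobeniusEnd : Module.End F (AlgebraicClosure F) :=
  (FiniteField.frobeniusAlgHom F (AlgebraicClosure F)).toLinearMap

theorem frobeniusEnd_pow_apply (n : ℕ) (x : Ω) : (frobeniusEnd F ^ n) x = x ^ Fintype.card F ^ n := by
  rw [Module.End.pow_apply, AlgHom.coe_toLinearMap, FiniteField.coe_frobeniusAlgHom, pow_iterate]

theorem qAssoc_eq_aeval_s15 (f : F[X]) (x : Ω) : qAssoc F f x = aeval (frobeniusEnd F) f x := by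
  rw [aeval_def, eval₂_eq_sum, Polynomial.sum_def, LinearMap.sum_apply, qAssoc]
  refine Finset.sum_congr rfl fun i _ => ?_
  rw [Module.End.mul_apply, Module.algebraMap_end_apply, frobeniusEnd_pow_apply, Algebra.smul_def]

theorem aeval_frobeniusEnd_X_pow_sub_one_apply (d : ℕ) (x : Ω) :
    aeval (frobeniusEnd F) (X ^ d - 1 : F[X]) x = x ^ Fintype.card F ^ d - x := by
  rw [map_sub, map_pow, aeval_X, map_one, LinearMap.sub_apply, frobeniusEnd_pow_apply,
    Module.End.one_apply]

noncomputable def linearizedPoly (g : F[X]) : Polynomial Ω :=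
  ∑ i ∈ g.support, C (algebraMap F Ω (g.coeff i)) * X ^ Fintype.card F ^ i

theorem eval_linearizedPoly (g : F[X]) (x : Ω) : (linearizedPoly g).eval x = qAssoc F g x := by
  simp [linearizedPoly, qAssoc, eval_finsetSum]

theorem coeff_linearizedPoly_card_pow (g : F[X]) (n : ℕ) :
    (linearizedPoly g).coeff (Fintype.card F ^ n) = algebraMap F Ω (g.coeff n) := by
  have hinj := Nat.pow_right_injective (Fintype.one_lt_card (α := F))
  simp_rw [linearizedPoly, finsetSum_coeff, coeff_C_mul_X_pow, hinj.eq_iff, Finset.sum_ite_eq]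
  split_ifs with h
  · rfl
  · rw [notMem_support_iff.mp h, map_zero]

theorem natDegree_linearizedPoly {g : F[X]} (hg : g ≠ 0) :
    (linearizedPoly g).natDegree = Fintype.card F ^ g.natDegree := by
  refine le_antisymm (natDegree_sum_le_of_forall_le _ _ fun i hi => ?_)
    (le_natDegree_of_ne_zero ?_)
  · exact (natDegree_C_mul_X_pow_le _ _).trans
      (Nat.pow_le_pow_right Fintype.card_pos (le_natDegree_of_mem_supp i hi))
  · rw [coeff_linearizedPoly_card_pow, ne_eq, FaithfulSMul.algebraMap_eq_zero_iff]
    exact leadingCoeff_ne_zero.mpr hg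

theorem derivative_linearizedPoly (g : F[X]) :
    derivative (linearizedPoly g) = C (algebraMap F Ω (g.coeff 0)) := by
  have hq : ((Fintype.card F : ℕ) : Ω) = 0 := by
    rw [← map_natCast (algebraMap F Ω), FiniteField.cast_card_eq_zero, map_zero]
  have hterm : ∀ i, derivative (C (algebraMap F Ω (g.coeff i)) * X ^ Fintype.card F ^ i) =
      if i = 0 then C (algebraMap F Ω (g.coeff 0)) else 0 := by
    intro i
    rcases eq_or_ne i 0 with rfl | hi
    · simp
    · rw [derivative_C_mul_X_pow, Nat.cast_pow, hq, zero_pow hi, mul_zero, map_zero, zero_mul,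
        if_neg hi]
  rw [linearizedPoly, derivative_sum, Finset.sum_congr rfl fun i _ => hterm i, Finset.sum_ite_eq']
  split_ifs with h
  · rfl
  · rw [notMem_support_iff.mp h, map_zero, map_zero]

theorem qAssoc_surjective {g : F[X]} (hg : g ≠ 0) : Function.Surjective (qAssoc F g) := by
  intro x
  have hdeg : (linearizedPoly g - C x).natDegree ≠ 0 := by
    rw [natDegree_sub_C, natDegree_linearizedPoly hg]
    positivity
  obtain ⟨y, hy⟩ := IsAlgClosed.exists_root _ fun h => hdeg (natDegree_eq_of_degree_eq_some h)
  rw [IsRoot, eval_sub, eval_C, sub_eq_zero, eval_linearizedPoly] at hy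
  exact ⟨y, hy⟩

theorem card_setOf_qAssoc_eq_zero {g : F[X]} (hg : g.coeff 0 ≠ 0) :
    Nat.card {x : Ω | qAssoc F g x = 0} = Fintype.card F ^ g.natDegree := by
  have hg0 : g ≠ 0 := fun h => hg (by rw [h, coeff_zero])
  have hsep : (linearizedPoly g).Separable := by
    rw [Separable, derivative_linearizedPoly]
    have hunit : IsUnit (C (algebraMap F Ω (g.coeff 0))) :=
      isUnit_C.mpr (Ne.isUnit ((FaithfulSMul.algebraMap_eq_zero_iff F Ω).not.mpr hg))
    exact isCoprime_one_right.of_isCoprime_of_dvd_right hunit.dvd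
  have hne : linearizedPoly g ≠ 0 :=
    ne_zero_of_natDegree_gt (n := 0) (by rw [natDegree_linearizedPoly hg0]; positivity)
  have hroots : {x : Ω | qAssoc F g x = 0} = (linearizedPoly g).rootSet Ω := by
    ext x
    rw [mem_rootSet, coe_aeval_eq_eval, eval_linearizedPoly]
    exact (and_iff_right hne).symm
  rw [hroots, Nat.card_eq_fintype_card, card_rootSet_eq_natDegree hsep (IsAlgClosed.splits _),
    natDegree_linearizedPoly hg0]

end Frobenius

theorem sumset_eq_roots_general
    (F : Type*) [Field F] [Fintype F] [DecidableEq F]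
    (q : ℕ) (hq : q = Fintype.card F)
    {k : ℕ} (f : Fin k → Polynomial F)
    (d : Fin k → ℕ)
    (ℓ : ℕ) (hℓ : 0 < ℓ) (hdvd : ∀ i, d i ∣ ℓ)
    (G H : Polynomial F)
    (hG : G = gcd ((X : Polynomial F) ^ ℓ - 1)
      (Finset.univ.gcd fun i => f i * ((X : Polynomial F) ^ ℓ - 1) / ((X : Polynomial F) ^ (d i) - 1)))
    (hH : H = ((X : Polynomial F) ^ ℓ - 1) / G) :
    {x : AlgebraicClosure F | ∃ a : Fin k → AlgebraicClosure F,
        (∀ i, a i ^ q ^ (d i) = a i) ∧ x = ∑ i, qAssoc F (f i) (a i)} =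
      {x : AlgebraicClosure F | qAssoc F H x = 0} ∧
    Nat.card {x : AlgebraicClosure F // ∃ a : Fin k → AlgebraicClosure F,
        (∀ i, a i ^ q ^ (d i) = a i) ∧ x = ∑ i, qAssoc F (f i) (a i)} = q ^ H.natDegree := by
  subst hq
  have hA : (X ^ ℓ - 1 : F[X]) ≠ 0 := X_pow_sub_C_ne_zero hℓ 1
  have hG0 : G ≠ 0 := ne_zero_of_dvd_ne_zero hA (hG ▸ gcd_dvd_left _ _)
  have hHA : H ∣ X ^ ℓ - 1 := hH ▸ EuclideanDomain.div_dvd_of_dvd (hG ▸ gcd_dvd_left _ _)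
  have hsurj : Function.Surjective (aeval (frobeniusEnd F) G) := by
    simpa only [← funext (qAssoc_eq_aeval_s15 G)] using qAssoc_surjective hG0
  have hS := sumset_eq_ker_aeval (frobeniusEnd F) f (fun i => X ^ d i - 1) _ G H hA
    (fun i => pow_sub_one_dvd_pow_sub_one_of_dvd X (hdvd i)) hG hH hsurj
  simp only [aeval_frobeniusEnd_X_pow_sub_one_apply, sub_eq_zero] at hS
  simp only [← qAssoc_eq_aeval_s15] at hS
  exact ⟨hS, (congrArg (fun s : Set _ => Nat.card s) hS).trans
    (card_setOf_qAssoc_eq_zero (coeff_zero_ne_zero_of_dvd_X_pow_sub_one hℓ hHA))⟩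

/-- For nonzero `f₁, …, f_k ∈ F_q[x]`, positive integers `d₁, …, d_k` and `ℓ` divisible by each
`dᵢ`, with `G_ℓ = gcd(x^ℓ - 1, f₁(x)(x^ℓ-1)/(x^{d₁}-1), …)` and `H_ℓ = (x^ℓ-1)/G_ℓ`, the sumset
`L_{f₁}(F_{q^{d₁}}) + ⋯ + L_{f_k}(F_{q^{d_k}})` equals the set of roots of `L_{H_ℓ}` in the
algebraic closure of `F_q`, and in particular has exactly `q^{deg H_ℓ}` elements. -/
theorem sumset_eq_roots
    (F : Type*) [Field F] [Fintype F] [DecidableEq F]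
    (q : ℕ) (hq : q = Fintype.card F)
    {k : ℕ} (f : Fin k → Polynomial F) (hf : ∀ i, f i ≠ 0)
    (d : Fin k → ℕ) (hd : ∀ i, 0 < d i)
    (ℓ : ℕ) (hℓ : 0 < ℓ) (hdvd : ∀ i, d i ∣ ℓ)
    (G H : Polynomial F)
    (hG : G = gcd ((X : Polynomial F) ^ ℓ - 1)
      (Finset.univ.gcd fun i => f i * ((X : Polynomial F) ^ ℓ - 1) / ((X : Polynomial F) ^ (d i) - 1)))
    (hH : H = ((X : Polynomial F) ^ ℓ - 1) / G) :
    {x : AlgebraicClosure F | ∃ a : Fin k → AlgebraicClosure F,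
        (∀ i, a i ^ q ^ (d i) = a i) ∧ x = ∑ i, qAssoc F (f i) (a i)} =
      {x : AlgebraicClosure F | qAssoc F H x = 0} ∧
    Nat.card {x : AlgebraicClosure F // ∃ a : Fin k → AlgebraicClosure F,
        (∀ i, a i ^ q ^ (d i) = a i) ∧ x = ∑ i, qAssoc F (f i) (a i)} = q ^ H.natDegree :=
  sumset_eq_roots_general F q hq f d ℓ hℓ hdvd G H hG hH
end
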